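/- Let (J,M) be an instance of P||C_max with machines labeled 1,…,m and let T ∈ ℕ. Define the directed graph G_T whose vertex set is the set of pairs (J', i) with J' ⊆ J and i ∈ {1,…,m+1} such that there exists a function assigning each job of J' to a machine in {i,…,m} with every machine load at most T (with (∅, m+1) always a vertex), and with an arc from (J', i) to (J'', i+1) whenever both are vertices, J'' ⊆ J', and ∑_{j ∈ J'∖J''} p_j ≤ T. Let s = (J,1) and t = (∅, m+1). Then the map that sends a directed s–t path with vertex sequence (J'_1,1), (J'_2,2), …, (J'_{m+1}, m+1) (where J'_1 = J and J'_{m+1} = ∅) to the schedule assigning the jobs J'_i ∖ J'_{i+1} to machine i for each i ∈ {1,…,m} is a bijection between the directed s–t paths in G_T and the schedules of (J,M) with makespan at most T. -/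

import Mathlib

/-! A path `univ = c 1 ⊇ c 2 ⊇ ⋯ ⊇ c (m + 1) = ∅` is a descending chain, so each job `j` lies
in `c i` exactly for `1 ≤ i ≤ k` for a unique `1 ≤ k ≤ m`, and goes to machine `k`. Conversely a
schedule `σ` yields the chain `c i = {j | i ≤ σ j}`. Under this correspondence the arc condition
between `c i` and `c (i + 1)` is the load bound on machine `i`, and every vertex condition is
witnessed by `σ` itself. -/

open Finset

noncomputable section

/-- The load of machine `i` under schedule `σ`. -/
def load {n m : ℕ} (p : Fin n → ℕ) (σ : Fin n → Fin m) (i : Fin m) : ℕ :=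
  ∑ j, if σ j = i then p j else 0

/-- The makespan of a schedule: the maximum machine load. -/
def makespan {n m : ℕ} (p : Fin n → ℕ) (σ : Fin n → Fin m) : ℕ :=
  Finset.univ.sup (load p σ)

/-- `(J', i)` is a vertex of the DP graph: the jobs of `J'` can be assigned to the machines
`{i, …, m}` (machines labelled `1, …, m`) with every machine load at most `T`. -/
def IsVertex (n m T : ℕ) (p : Fin n → ℕ) (J' : Finset (Fin n)) (i : ℕ) : Prop :=
  ∃ f : Fin n → ℕ, (∀ j ∈ J', i ≤ f j ∧ f j ≤ m) ∧
    ∀ k : ℕ, ∑ j ∈ J'.filter (fun j => f j = k), p j ≤ T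

/-- An `s`–`t` path in the DP graph, recorded by its vertex sequence
`(c 1, 1), (c 2, 2), …, (c (m+1), m+1)` with `c 1 = J` and `c (m+1) = ∅`
(values of `c` outside `{1, …, m+1}` are normalized to `∅`).  Consecutive vertices must be
joined by an arc: both are vertices, `c (i+1) ⊆ c i`, and `p(c i ∖ c (i+1)) ≤ T`. -/
def IsPath (n m T : ℕ) (p : Fin n → ℕ) (c : ℕ → Finset (Fin n)) : Prop :=
  c 1 = Finset.univ ∧ c (m + 1) = ∅ ∧
  c 0 = ∅ ∧ (∀ i, m + 1 < i → c i = ∅) ∧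
  (∀ i, 1 ≤ i → i ≤ m + 1 → IsVertex n m T p (c i) i) ∧
  (∀ i, 1 ≤ i → i ≤ m →
    c (i + 1) ⊆ c i ∧ ∑ j ∈ c i \ c (i + 1), p j ≤ T)

theorem AntitoneOn.exists_mem_iff_le {α : Type*} {s : ℕ → Finset α} {a b : ℕ} {x : α}
    (hs : AntitoneOn s (Set.Icc a b)) (hab : a ≤ b) (ha : x ∈ s a) (hb : x ∉ s b) :
    ∃ k, a ≤ k ∧ k < b ∧ ∀ i ∈ Set.Icc a b, x ∈ s i ↔ i ≤ k := by
  classical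
  have hex : ∃ i, a ≤ i ∧ x ∉ s i := ⟨b, hab, hb⟩
  obtain ⟨haN, hxN⟩ := Nat.find_spec hex
  have hNb : Nat.find hex ≤ b := Nat.find_min' hex ⟨hab, hb⟩
  have hNa : a < Nat.find hex := lt_of_le_of_ne haN fun h => hxN (h ▸ ha)
  refine ⟨Nat.find hex - 1, by omega, by omega, fun i ⟨hai, hib⟩ => ⟨fun hx => ?_, fun hi => ?_⟩⟩
  · by_contra! hi
    exact hxN (hs ⟨haN, hNb⟩ ⟨hai, hib⟩ (by omega) hx)
  · by_contra hx
    exact Nat.find_min hex (by omega) ⟨hai, hx⟩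

section Schedules

variable {n m T : ℕ} {p : Fin n → ℕ}

theorem load_eq_sum_filter (σ : Fin n → Fin m) (i : Fin m) :
    load p σ i = ∑ j ∈ univ.filter (σ · = i), p j := by
  rw [load, sum_filter]

theorem sum_le_load {σ : Fin n → Fin m} {S : Finset (Fin n)} {i : Fin m}
    (hS : ∀ j ∈ S, σ j = i) : ∑ j ∈ S, p j ≤ load p σ i := by
  rw [load_eq_sum_filter]
  exact sum_le_sum_of_subset fun j hj => mem_filter.2 ⟨mem_univ j, hS j hj⟩

theorem makespan_le_iff {σ : Fin n → Fin m} : makespan p σ ≤ T ↔ ∀ i, load p σ i ≤ T := by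
  simp [makespan, Finset.sup_le_iff]

/-- The path of a schedule `σ`: its `i`-th set holds the jobs on machines `i, …, m`
(machine `k : Fin m` being machine `k + 1`). -/
def pathOf (σ : Fin n → Fin m) (i : ℕ) : Finset (Fin n) :=
  univ.filter fun j => 1 ≤ i ∧ i ≤ (σ j : ℕ) + 1

theorem mem_pathOf {σ : Fin n → Fin m} {i : ℕ} {j : Fin n} :
    j ∈ pathOf σ i ↔ 1 ≤ i ∧ i ≤ (σ j : ℕ) + 1 := by
  simp [pathOf]

theorem mem_pathOf_sdiff_iff {σ : Fin n → Fin m} {j : Fin n} {k : Fin m} :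
    j ∈ pathOf σ ((k : ℕ) + 1) \ pathOf σ ((k : ℕ) + 2) ↔ σ j = k := by
  simp only [mem_sdiff, mem_pathOf, Fin.ext_iff]
  omega

theorem isVertex_of_makespan_le {σ : Fin n → Fin m} (h : makespan p σ ≤ T)
    {J' : Finset (Fin n)} {i : ℕ} (hJ' : ∀ j ∈ J', i ≤ (σ j : ℕ) + 1) :
    IsVertex n m T p J' i := by
  refine ⟨fun j => (σ j : ℕ) + 1, fun j hj => ⟨hJ' j hj, (σ j).2⟩, fun k => ?_⟩
  obtain hempty | ⟨j₀, hj₀⟩ := (J'.filter fun j => (σ j : ℕ) + 1 = k).eq_empty_or_nonempty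
  · simp [hempty]
  refine (sum_le_load fun j hj => ?_).trans (makespan_le_iff.1 h (σ j₀))
  simp only [mem_filter] at hj hj₀
  exact Fin.ext (by omega)

theorem isPath_pathOf_iff {σ : Fin n → Fin m} :
    IsPath n m T p (pathOf σ) ↔ makespan p σ ≤ T := by
  have hlt (j : Fin n) : (σ j : ℕ) < m := (σ j).2
  refine ⟨fun hc => makespan_le_iff.2 fun k => ?_, fun h => ?_⟩
  · obtain ⟨-, -, -, -, -, harc⟩ := hc
    have hfiber : univ.filter (σ · = k) = pathOf σ ((k : ℕ) + 1) \ pathOf σ ((k : ℕ) + 2) := by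
      ext j
      simp only [mem_filter, mem_univ, true_and, mem_pathOf_sdiff_iff]
    rw [load_eq_sum_filter, hfiber]
    exact (harc _ (by omega) (by omega)).2
  refine ⟨?_, ?_, ?_, fun i hi => ?_, fun i _ _ => ?_, fun i hi1 him => ⟨?_, ?_⟩⟩
  any_goals
    ext j
    have := hlt j
    simp only [mem_pathOf, mem_univ, notMem_empty, iff_true, iff_false]
    omega
  · exact isVertex_of_makespan_le h fun j hj => (mem_pathOf.1 hj).2
  · intro j
    simp only [mem_pathOf]
    omega
  · refine (sum_le_load (i := ⟨i - 1, by omega⟩) fun j hj => ?_).trans (makespan_le_iff.1 h _)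
    simp only [mem_sdiff, mem_pathOf] at hj
    exact Fin.ext (by simp only; omega)

theorem pathOf_injective : Function.Injective (pathOf : (Fin n → Fin m) → ℕ → Finset (Fin n)) :=
  fun σ τ h => funext fun j => by
    have hj : j ∈ pathOf σ ((τ j : ℕ) + 1) \ pathOf σ ((τ j : ℕ) + 2) := by
      rw [h]; exact mem_pathOf_sdiff_iff.2 rfl
    exact mem_pathOf_sdiff_iff.1 hj

theorem IsPath.antitoneOn {c : ℕ → Finset (Fin n)} (hc : IsPath n m T p c) :
    AntitoneOn c (Set.Icc 1 (m + 1)) := by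
  obtain ⟨-, -, -, -, -, harc⟩ := hc
  exact antitoneOn_of_add_one_le Set.ordConnected_Icc fun i _ hi hi' =>
    (harc i hi.1 (by have := hi'.2; omega)).1

theorem IsPath.exists_pathOf_eq {c : ℕ → Finset (Fin n)} (hc : IsPath n m T p c) :
    ∃ σ : Fin n → Fin m, pathOf σ = c := by
  have hlevel (j : Fin n) := hc.antitoneOn.exists_mem_iff_le (by omega : 1 ≤ m + 1)
    (hc.1 ▸ mem_univ j) (hc.2.1 ▸ notMem_empty j)
  obtain ⟨-, -, hzero, hbeyond, -, -⟩ := hc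
  choose K hK1 hKm hK using hlevel
  refine ⟨fun j => ⟨K j - 1, by have := hKm j; have := hK1 j; omega⟩, funext fun i => ?_⟩
  by_cases hi : 1 ≤ i ∧ i ≤ m + 1
  · ext j
    rw [mem_pathOf, hK j i hi, Fin.val_mk]
    have := hK1 j
    omega
  · have hci : c i = ∅ := by
      rcases Nat.lt_or_ge (m + 1) i with h | h
      · exact hbeyond i h
      · obtain rfl : i = 0 := by omega
        exact hzero
    ext j
    rw [hci, mem_pathOf, Fin.val_mk]
    have := hKm j
    simp only [notMem_empty, iff_false]
    omega

end Schedules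

def scheduleEquivPath (n m T : ℕ) (p : Fin n → ℕ) :
    {σ : Fin n → Fin m // makespan p σ ≤ T} ≃ {c : ℕ → Finset (Fin n) // IsPath n m T p c} :=
  Equiv.ofBijective (fun σ => ⟨pathOf σ.1, isPath_pathOf_iff.2 σ.2⟩)
    ⟨fun σ τ h => Subtype.ext (pathOf_injective (congrArg Subtype.val h)), fun c => by
      obtain ⟨σ, hσ⟩ := c.2.exists_pathOf_eq
      exact ⟨⟨σ, isPath_pathOf_iff.1 (hσ ▸ c.2)⟩, Subtype.ext hσ⟩⟩

/-- The map sending an `s`–`t` path `(J'_1,1), …, (J'_{m+1},m+1)` of the DP graph to the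
schedule that assigns the jobs `J'_i ∖ J'_{i+1}` to machine `i` is a bijection between the
`s`–`t` paths and the schedules of makespan at most `T`.  (Machine `i ∈ {1, …, m}` is
represented by the element of `Fin m` with value `i − 1`.) -/
theorem dp_paths_biject_schedules (n m T : ℕ) (p : Fin n → ℕ) :
    ∃ Φ : {c : ℕ → Finset (Fin n) // IsPath n m T p c} →
          {σ : Fin n → Fin m // makespan p σ ≤ T},
      Function.Bijective Φ ∧
      ∀ (c : {c : ℕ → Finset (Fin n) // IsPath n m T p c}) (j : Fin n),
        j ∈ c.1 (((Φ c).1 j : ℕ) + 1) \ c.1 (((Φ c).1 j : ℕ) + 2) := by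
  refine ⟨(scheduleEquivPath n m T p).symm, (scheduleEquivPath n m T p).symm.bijective,
    fun c j => ?_⟩
  obtain ⟨σ, rfl⟩ := (scheduleEquivPath n m T p).surjective c
  rw [Equiv.symm_apply_apply]
  exact mem_pathOf_sdiff_iff.2 rfl
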